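/- For the skyline diagram D(α) of a composition α, the number r_3(D(α)) of subdiagrams equal to configuration (C), (C'), or (C'') equals the sum over all quadruples i_1 < i_2 < i_3 < i_4 with α_{i_1} < α_{i_2} and α_{i_3} < α_{i_4} of (α_{i_2} − α_{i_1})·(α_{i_4} − α_{i_3}). -/
import Mathlib


/-- Box `(i,j)` (0-indexed) belongs to the skyline diagram `D(α)` iff `j < α i`. -/
def skyline {n : ℕ} (α : Fin n → ℕ) (i j : Fin n) : Prop := (j : ℕ) < α i

instance {n : ℕ} (α : Fin n → ℕ) (i j : Fin n) : Decidable (skyline α i j) := by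
  unfold skyline; infer_instance

/-- `r₃`: the number of configurations (C), (C') or (C''): rows `i₁<i₂<i₃<i₄` and
columns `j₁, j₂` (in any relative order, possibly equal) with `(i₁,j₁)`, `(i₃,j₂)`
blank and `(i₂,j₁)`, `(i₄,j₂)` present. -/
def r3 {n : ℕ} (D : Fin n → Fin n → Prop) [∀ i j, Decidable (D i j)] : ℕ :=
  ((Finset.univ : Finset ((Fin n × Fin n × Fin n × Fin n) × Fin n × Fin n)).filter
    fun t =>
      t.1.1 < t.1.2.1 ∧ t.1.2.1 < t.1.2.2.1 ∧ t.1.2.2.1 < t.1.2.2.2 ∧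
      ¬ D t.1.1 t.2.1 ∧ D t.1.2.1 t.2.1 ∧
      ¬ D t.1.2.2.1 t.2.2 ∧ D t.1.2.2.2 t.2.2).card

lemma count_lemma {n : ℕ} (a b : ℕ) (hb : b ≤ n) :
    ((Finset.univ : Finset (Fin n)).filter fun j : Fin n => a ≤ (j:ℕ) ∧ (j:ℕ) < b).card = b - a := by
  rw [← Nat.card_Ico, ← Finset.card_image_of_injective _ Fin.val_injective]
  congr 1
  ext m
  simp only [Finset.mem_image, Finset.mem_filter, Finset.mem_univ, true_and, Finset.mem_Ico]
  constructor
  · rintro ⟨j, hj, rfl⟩; exact hj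
  · intro hm; exact ⟨⟨m, lt_of_lt_of_le hm.2 hb⟩, hm, rfl⟩

/-- For the skyline diagram of a composition `α` (with all parts at most `n`),
`r₃(D(α)) = Σ_{i₁<i₂<i₃<i₄, α_{i₁}<α_{i₂}, α_{i₃}<α_{i₄}} (α_{i₂}−α_{i₁})(α_{i₄}−α_{i₃})`. -/
theorem r3_skyline {n : ℕ} (α : Fin n → ℕ) (hα : ∀ i, α i ≤ n) :
    r3 (skyline α) =
      ∑ q ∈ (Finset.univ : Finset (Fin n × Fin n × Fin n × Fin n)).filter
        (fun q => q.1 < q.2.1 ∧ q.2.1 < q.2.2.1 ∧ q.2.2.1 < q.2.2.2 ∧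
          α q.1 < α q.2.1 ∧ α q.2.2.1 < α q.2.2.2),
        (α q.2.1 - α q.1) * (α q.2.2.2 - α q.2.2.1) := by
  unfold r3
  rw [Finset.card_filter, Fintype.sum_prod_type, Finset.sum_filter]
  apply Finset.sum_congr rfl
  intro q _
  by_cases h1 : q.1 < q.2.1
  · by_cases h2 : q.2.1 < q.2.2.1
    · by_cases h3 : q.2.2.1 < q.2.2.2
      · have key : ∑ j : Fin n × Fin n,
            (if q.1 < q.2.1 ∧ q.2.1 < q.2.2.1 ∧ q.2.2.1 < q.2.2.2 ∧
              ¬ skyline α q.1 j.1 ∧ skyline α q.2.1 j.1 ∧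
              ¬ skyline α q.2.2.1 j.2 ∧ skyline α q.2.2.2 j.2 then 1 else 0) =
            (α q.2.1 - α q.1) * (α q.2.2.2 - α q.2.2.1) := by
          rw [Fintype.sum_prod_type]
          have : ∀ j₁ j₂ : Fin n,
              (if q.1 < q.2.1 ∧ q.2.1 < q.2.2.1 ∧ q.2.2.1 < q.2.2.2 ∧
                ¬ skyline α q.1 j₁ ∧ skyline α q.2.1 j₁ ∧
                ¬ skyline α q.2.2.1 j₂ ∧ skyline α q.2.2.2 j₂ then (1:ℕ) else 0) =
              (if α q.1 ≤ (j₁:ℕ) ∧ (j₁:ℕ) < α q.2.1 then 1 else 0) *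
              (if α q.2.2.1 ≤ (j₂:ℕ) ∧ (j₂:ℕ) < α q.2.2.2 then 1 else 0) := by
            intro j₁ j₂
            simp only [skyline, not_lt]
            by_cases hA : α q.1 ≤ (j₁:ℕ) ∧ (j₁:ℕ) < α q.2.1 <;>
              by_cases hB : α q.2.2.1 ≤ (j₂:ℕ) ∧ (j₂:ℕ) < α q.2.2.2 <;>
              simp [h1, h2, h3, hA, hB]
          simp only [this, ← Finset.sum_mul_sum]
          rw [← Finset.card_filter, ← Finset.card_filter,
            count_lemma _ _ (hα q.2.1), count_lemma _ _ (hα q.2.2.2)]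
        rw [key]
        by_cases h4 : α q.1 < α q.2.1
        · by_cases h5 : α q.2.2.1 < α q.2.2.2
          · simp [h1, h2, h3, h4, h5]
          · simp [h1, h2, h3, h4, h5, Nat.sub_eq_zero_of_le (le_of_not_gt h5)]
        · simp [h1, h2, h3, h4, Nat.sub_eq_zero_of_le (le_of_not_gt h4)]
      · simp [h1, h2, h3]
    · simp [h1, h2]
  · simp [h1]
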